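/- Let ψ be a strict Archimedean generator, F̄_0,…,F̄_d survival functions, λ_0,…,λ_d>0, and K:[0,∞)→[0,∞) a continuous strictly increasing bijection such that ψ^{-1}(F̄_i(x)) = λ_i·K(x) for all x≥0 and all i=0,1,…,d. Set α_i = λ_0/(λ_i+λ_0), F̄_{τ_k}(t) = ψ((λ_0+λ_k)K(t)), and F̄_τ(t_1,…,t_d) = ψ( λ_0K(max_{1≤k≤d} t_k) + ∑_{k=1}^d λ_kK(t_k) ). Define Ĉ:(0,1]^d→(0,1] by Ĉ(u_1,…,u_d) = ψ( ψ^{-1}(u_j) + ∑_{k=1,k≠j}^d (1−α_k)ψ^{-1}(u_k) ), where j is the smallest index attaining max_{1≤i≤d} α_i·ψ^{-1}(u_i). Then F̄_τ(t_1,…,t_d) = Ĉ( F̄_{τ_1}(t_1), …, F̄_{τ_d}(t_d) ) for all (t_1,…,t_d)∈[0,∞)^d; in particular the survival copula of the default times does not depend on K. -/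

import Mathlib

open Set MeasureTheory

/-- A survival function: continuous, strictly decreasing on `[0,∞)`, equal to `1` at `0`,
tending to `0` at `+∞`, with values in `(0,1]` on `[0,∞)`. -/
structure SurvFun where
  toFun : ℝ → ℝ
  continuousOn : ContinuousOn toFun (Ici 0)
  strictAntiOn : StrictAntiOn toFun (Ici 0)
  map_zero : toFun 0 = 1
  tendsto_atTop : Filter.Tendsto toFun Filter.atTop (nhds 0)
  mapsTo : MapsTo toFun (Ici 0) (Ioc 0 1)

/-- A strict Archimedean generator: a continuous strictly decreasing bijection of `[0,∞)`
onto `(0,1]` with `ψ 0 = 1` and `ψ x → 0` as `x → ∞`, together with its inverse. -/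
structure ArchGen extends SurvFun where
  bijOn : BijOn toFun (Ici 0) (Ioc 0 1)
  inv : ℝ → ℝ
  inv_mapsTo : MapsTo inv (Ioc 0 1) (Ici 0)
  leftInv : ∀ x ∈ Ici (0:ℝ), inv (toFun x) = x
  rightInv : ∀ u ∈ Ioc (0:ℝ) 1, toFun (inv u) = u

/-- The smallest index attaining the maximum of `g` over `Fin (n+1)`. -/
noncomputable def argmaxMin {n : ℕ} (g : Fin (n + 1) → ℝ) : Fin (n + 1) :=
  (Finset.univ.filter fun i => ∀ i', g i' ≤ g i).min' (by
    obtain ⟨j, -, hj⟩ :=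
      Finset.exists_max_image (Finset.univ : Finset (Fin (n + 1))) g ⟨0, Finset.mem_univ 0⟩
    exact ⟨j, Finset.mem_filter.2 ⟨Finset.mem_univ j, fun i' => hj i' (Finset.mem_univ i')⟩⟩)

/-!
Put `u_k = ψ((λ₀ + λ_k) K(t_k))`, so `ψ⁻¹(u_k) = (λ₀ + λ_k) K(t_k)`. The weights are chosen so that
`α_k ψ⁻¹(u_k) = λ₀ K(t_k)` and `(1 - α_k) ψ⁻¹(u_k) = λ_k K(t_k)`. Hence the index `j` maximising
`α_i ψ⁻¹(u_i)` maximises `K(t_i)`, i.e. `t_j = max_k t_k` as `K` is strictly increasing, and the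
argument of `ψ` in `Ĉ` becomes `λ₀ K(t_j) + λ_j K(t_j) + ∑_{k ≠ j} λ_k K(t_k)`, which is the one in `F̄_τ`.
-/

lemma argmaxMin_spec {n : ℕ} (g : Fin (n + 1) → ℝ) (i : Fin (n + 1)) : g i ≤ g (argmaxMin g) :=
  (Finset.mem_filter.1 (Finset.min'_mem (Finset.univ.filter fun i => ∀ i', g i' ≤ g i) _)).2 i

lemma div_add_mul_add_mul {𝕜 : Type*} [Field 𝕜] {a b : 𝕜} (h : b + a ≠ 0) (x : 𝕜) :
    a / (b + a) * ((a + b) * x) = a * x := by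
  rw [add_comm a b]
  field_simp

lemma one_sub_div_add_mul_add_mul {𝕜 : Type*} [Field 𝕜] {a b : 𝕜} (h : b + a ≠ 0) (x : 𝕜) :
    (1 - a / (b + a)) * ((a + b) * x) = b * x := by
  rw [sub_mul, one_mul, div_add_mul_add_mul h]
  ring

theorem survival_copula_linear_distortion_general
    {d : ℕ} (G : ArchGen)
    (lam0 : ℝ) (lam : Fin (d + 1) → ℝ) (hlam0 : 0 < lam0) (hlam : ∀ i, 0 < lam i)
    (K : ℝ → ℝ) (hKm : StrictMonoOn K (Ici 0))
    (hKb : BijOn K (Ici 0) (Ici 0)) :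
    ∀ t : Fin (d + 1) → ℝ, (∀ k, 0 ≤ t k) →
      G.toFun (lam0 * K (Finset.univ.sup' Finset.univ_nonempty t)
          + ∑ k, lam k * K (t k))
        = (fun u : Fin (d + 1) → ℝ =>
            let α : Fin (d + 1) → ℝ := fun i => lam0 / (lam i + lam0)
            let j : Fin (d + 1) := argmaxMin fun i => α i * G.inv (u i)
            G.toFun (G.inv (u j) + ∑ k ∈ Finset.univ.erase j, (1 - α k) * G.inv (u k)))
          (fun k => G.toFun ((lam0 + lam k) * K (t k))) := by
  intro t ht
  dsimp only
  have hsum_ne : ∀ k, lam k + lam0 ≠ 0 := fun k => (add_pos (hlam k) hlam0).ne'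
  have hinv : ∀ k, G.inv (G.toFun ((lam0 + lam k) * K (t k))) = (lam0 + lam k) * K (t k) :=
    fun k => G.leftInv _ (mul_nonneg (add_pos hlam0 (hlam k)).le (hKb.mapsTo (ht k)))
  simp only [hinv, div_add_mul_add_mul (hsum_ne _), one_sub_div_add_mul_add_mul (hsum_ne _)]
  set j := argmaxMin fun i => lam0 * K (t i)
  have htj : ∀ i, t i ≤ t j := fun i =>
    (hKm.le_iff_le (ht i) (ht j)).1 <|
      le_of_mul_le_mul_left (argmaxMin_spec (fun i => lam0 * K (t i)) i) hlam0
  have hsup : Finset.univ.sup' Finset.univ_nonempty t = t j :=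
    le_antisymm (Finset.sup'_le _ _ fun i _ => htj i) (Finset.le_sup' t (Finset.mem_univ j))
  rw [hsup, ← Finset.add_sum_erase _ _ (Finset.mem_univ j)]
  congr 1
  ring

/-- under the proportionality restriction, the survival copula of the
default times takes a Marshall-Olkin-type form not depending on `K`. -/
theorem survival_copula_linear_distortion
    {d : ℕ} (G : ArchGen) (F0 : SurvFun) (F : Fin (d + 1) → SurvFun)
    (lam0 : ℝ) (lam : Fin (d + 1) → ℝ) (hlam0 : 0 < lam0) (hlam : ∀ i, 0 < lam i)
    (K : ℝ → ℝ) (hKc : ContinuousOn K (Ici 0)) (hKm : StrictMonoOn K (Ici 0))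
    (hKb : BijOn K (Ici 0) (Ici 0))
    (hprop0 : ∀ x ∈ Ici (0:ℝ), G.inv (F0.toFun x) = lam0 * K x)
    (hprop : ∀ i, ∀ x ∈ Ici (0:ℝ), G.inv ((F i).toFun x) = lam i * K x) :
    ∀ t : Fin (d + 1) → ℝ, (∀ k, 0 ≤ t k) →
      G.toFun (lam0 * K (Finset.univ.sup' Finset.univ_nonempty t)
          + ∑ k, lam k * K (t k))
        = (fun u : Fin (d + 1) → ℝ =>
            let α : Fin (d + 1) → ℝ := fun i => lam0 / (lam i + lam0)
            let j : Fin (d + 1) := argmaxMin fun i => α i * G.inv (u i)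
            G.toFun (G.inv (u j) + ∑ k ∈ Finset.univ.erase j, (1 - α k) * G.inv (u k)))
          (fun k => G.toFun ((lam0 + lam k) * K (t k))) :=
  survival_copula_linear_distortion_general G lam0 lam hlam0 hlam K hKm hKb
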